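/- Let M and N be finitely generated, semipositive binoids. Then for every positive integer q, #((M∧N)/[q](M∧N)₊) = #(M/[q]M₊) · #(N/[q]N₊). -/

import Mathlib

/-- A binoid: a commutative monoid (written additively) with an absorbing element `infty`. -/
class Binoid (N : Type*) extends AddCommMonoid N where
  infty : N
  add_infty : ∀ x : N, x + infty = infty

namespace Binoid

variable {N : Type*} [Binoid N]

theorem infty_add (x : N) : (infty : N) + x = infty := by
  rw [add_comm]; exact add_infty x

/-- `I ⊆ N` is an ideal of the binoid `N`. -/
def IsIdeal (I : Set N) : Prop :=
  (infty : N) ∈ I ∧ ∀ a ∈ I, ∀ n : N, n + a ∈ I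

/-- The ideal generated by a subset `S` of a binoid. -/
def span (S : Set N) : Set N :=
  insert (infty : N) {x : N | ∃ n : N, ∃ s ∈ S, x = n + s}

/-- The `q`-th Frobenius sum `[q]I` of an ideal: the ideal generated by `{q • a | a ∈ I}`. -/
def frob (q : ℕ) (I : Set N) : Set N :=
  span {x : N | ∃ a ∈ I, x = q • a}

/-- The set of units of a binoid. -/
def unitSet (N : Type*) [Binoid N] : Set N := {a : N | ∃ b : N, a + b = 0}

/-- `N₊`, the set (ideal) of non-units of a binoid. -/
def plusSet (N : Type*) [Binoid N] : Set N := (unitSet N)ᶜ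

/-- A binoid is semipositive if its unit group is finite. -/
def Semipositive (N : Type*) [Binoid N] : Prop := (unitSet N).Finite

/-- A binoid is positive if `0` is its only unit. -/
def Positive (N : Type*) [Binoid N] : Prop := unitSet N = {0}

/-- A binoid is finitely generated if it is generated, as a (commutative) monoid,
by finitely many elements. -/
def FG (N : Type*) [Binoid N] : Prop :=
  ∃ s : Finset N, AddSubmonoid.closure (s : Set N) = ⊤

/-- A binoid is cancellative if `a + c = b + c` with `c ≠ ∞` implies `a = b`. -/
def Cancellative (N : Type*) [Binoid N] : Prop :=
  ∀ a b c : N, c ≠ infty → a + c = b + c → a = b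

/-- A binoid is reduced if `∞` is its only nilpotent element. -/
def Reduced (N : Type*) [Binoid N] : Prop :=
  ∀ (a : N) (n : ℕ), 0 < n → n • a = (infty : N) → a = infty

/-- A binoid is torsion-free if `n • a = n • b` for some `n ≥ 1` implies `a = b`. -/
def TorsionFree (N : Type*) [Binoid N] : Prop :=
  ∀ (a b : N) (n : ℕ), 0 < n → n • a = n • b → a = b

/-- A binoid is integral if `N ∖ {∞}` is a submonoid. -/
def Integral (N : Type*) [Binoid N] : Prop :=
  (0 : N) ≠ infty ∧ ∀ a b : N, a + b = (infty : N) → a = infty ∨ b = infty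

/-- The radical of an ideal of a binoid. -/
def rad (I : Set N) : Set N := {a : N | ∃ k : ℕ, 0 < k ∧ k • a ∈ I}

/-- An `N₊`-primary ideal: an ideal whose radical is `N₊`. -/
def IsPrimaryIdeal (I : Set N) : Prop := IsIdeal I ∧ rad I = plusSet N

/-- A prime ideal of a binoid: a proper ideal whose complement is closed under addition. -/
def IsPrime (I : Set N) : Prop :=
  IsIdeal I ∧ I ≠ Set.univ ∧ ∀ a b : N, a ∉ I → b ∉ I → a + b ∉ I

/-- A minimal prime ideal of a binoid. -/
def IsMinimalPrime (I : Set N) : Prop :=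
  IsPrime I ∧ ∀ J : Set N, IsPrime J → J ⊆ I → J = I

/-- The set of lengths of strictly increasing chains of prime ideals of `N`. -/
def dimSet (N : Type*) [Binoid N] : Set ℕ :=
  {n : ℕ | ∃ c : Fin (n + 1) → Set N, (∀ i, IsPrime (c i)) ∧ StrictMono c}

/-- The combinatorial dimension of a binoid: the supremum of the lengths of strictly
increasing chains of prime ideals. -/
noncomputable def dim (N : Type*) [Binoid N] : ℕ := sSup (dimSet N)

/-- `#(N/[q]𝔫)`: the number of elements of the binoid `N/[q]𝔫`, not counting `∞`;
equivalently, the number of elements of `N` outside of the ideal `[q]𝔫`. -/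
noncomputable def hkOn (I : Set N) (q : ℕ) : ℕ := Set.ncard ((frob q I)ᶜ)

/-- The Hilbert–Kunz multiplicity of an (`N₊`-primary) ideal `𝔫` on `N` is `L`:
the limit of `#(N/[q]𝔫)/q^(dim N)` as `q → ∞` is `L`. -/
def IsHKMultOn (I : Set N) (L : ℝ) : Prop :=
  Filter.Tendsto (fun q : ℕ => (hkOn I q : ℝ) / (q : ℝ) ^ dim N) Filter.atTop (nhds L)

/-- The Hilbert–Kunz multiplicity of the binoid `N` is `L`. -/
def IsHKMult (N : Type*) [Binoid N] (L : ℝ) : Prop :=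
  IsHKMultOn (plusSet N) L

/-- The sum `I + J` of two subsets of a binoid. -/
def idealSum (I J : Set N) : Set N := {x : N | ∃ a ∈ I, ∃ b ∈ J, x = a + b}


/-- The additive congruence on `N` contracting the subset `I` to a point.
(When `I` is an ideal, the relation below is already a congruence.) -/
def quotCon (I : Set N) : AddCon N :=
  addConGen (fun a b => a = b ∨ (a ∈ I ∧ b ∈ I))

/-- The residue class binoid `N/I`, obtained by contracting the ideal `I` to `∞`. -/
def BQuot (I : Set N) : Type _ := (quotCon I).Quotient

instance (I : Set N) : AddCommMonoid (BQuot I) :=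
  inferInstanceAs (AddCommMonoid (quotCon I).Quotient)

/-- The canonical projection `N → N/I`. -/
def BQuot.mk (I : Set N) (a : N) : BQuot I := (a : (quotCon I).Quotient)

instance (I : Set N) : Binoid (BQuot I) :=
  { (inferInstance : AddCommMonoid (BQuot I)) with
    infty := BQuot.mk I infty
    add_infty := fun x => AddCon.induction_on x fun a => by
      show BQuot.mk I a + BQuot.mk I infty = BQuot.mk I infty
      show ((a + infty : N) : (quotCon I).Quotient) = ((infty : N) : (quotCon I).Quotient)
      rw [add_infty] }

/-- The product of two binoids (with componentwise addition). -/
instance {M P : Type*} [Binoid M] [Binoid P] : Binoid (M × P) :=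
  { (inferInstance : AddCommMonoid (M × P)) with
    infty := ((infty : M), (infty : P))
    add_infty := fun x => by
      show (x.1 + infty, x.2 + infty) = ((infty : M), (infty : P))
      rw [add_infty, add_infty] }

/-- The ideal of `M × P` consisting of pairs one of whose coordinates is `∞`. -/
def smashIdeal (M P : Type*) [Binoid M] [Binoid P] : Set (M × P) :=
  {x : M × P | x.1 = infty ∨ x.2 = infty}

/-- The smash product `M ∧ P` of two binoids. -/
def Smash (M P : Type*) [Binoid M] [Binoid P] : Type _ :=
  BQuot (smashIdeal M P)

instance {M P : Type*} [Binoid M] [Binoid P] : AddCommMonoid (Smash M P) :=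
  inferInstanceAs (AddCommMonoid (BQuot (smashIdeal M P)))

instance {M P : Type*} [Binoid M] [Binoid P] : Binoid (Smash M P) :=
  inferInstanceAs (Binoid (BQuot (smashIdeal M P)))

/-- The class of `(m, p)` in the smash product `M ∧ P`. -/
def Smash.mk {M P : Type*} [Binoid M] [Binoid P] (m : M) (p : P) : Smash M P :=
  BQuot.mk (smashIdeal M P) (m, p)


end Binoid

/-!
A class `[a, b]` of `M ∧ N` is a unit iff `a` and `b` are units, so a generator `q • [s, t]` of
`[q](M ∧ N)₊` has a coordinate in `[q]M₊` or `[q]N₊`; conversely `q • [s, 0]` and `q • [0, t]`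
lie in `[q](M ∧ N)₊` for non-units `s`, `t`. Hence `[a, b] ∈ [q](M ∧ N)₊` iff `a ∈ [q]M₊` or
`b ∈ [q]N₊`, and `(a, b) ↦ [a, b]` is a bijection from the product of the complements of
`[q]M₊` and `[q]N₊` onto the complement of `[q](M ∧ N)₊`, since it is injective away from `∞`.
-/

namespace Binoid

variable {M N : Type*} [Binoid M] [Binoid N]

theorem eq_infty_of_zero_eq_infty (h : (0 : M) = infty) (a : M) : a = infty := by
  rw [← add_zero a, h, add_infty]

theorem infty_mem_frob (q : ℕ) (I : Set M) : (infty : M) ∈ frob q I :=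
  Set.mem_insert _ _

theorem ne_infty_of_notMem_frob {q : ℕ} {I : Set M} {a : M} (ha : a ∉ frob q I) : a ≠ infty :=
  fun h => ha (h ▸ infty_mem_frob q I)

theorem add_nsmul_mem_frob (q : ℕ) {I : Set M} {s : M} (hs : s ∈ I) (n : M) :
    n + q • s ∈ frob q I :=
  Or.inr ⟨n, q • s, ⟨s, hs, rfl⟩, rfl⟩

/-- Contracting an ideal to a point is already a congruence, so it is `quotCon I` itself. -/
def IsIdeal.addCon {I : Set M} (hI : IsIdeal I) : AddCon M where
  r a b := a = b ∨ (a ∈ I ∧ b ∈ I)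
  iseqv :=
    { refl := fun _ => Or.inl rfl
      symm := fun h => h.imp Eq.symm And.symm
      trans := by
        rintro a b c (rfl | hab) (rfl | hbc)
        exacts [Or.inl rfl, Or.inr hbc, Or.inr hab, Or.inr ⟨hab.1, hbc.2⟩] }
  add' := by
    rintro a b c d (rfl | hab) (rfl | hcd)
    · exact Or.inl rfl
    · exact Or.inr ⟨hI.2 _ hcd.1 a, hI.2 _ hcd.2 a⟩
    · rw [add_comm a, add_comm b]
      exact Or.inr ⟨hI.2 _ hab.1 c, hI.2 _ hab.2 c⟩
    · exact Or.inr ⟨hI.2 _ hcd.1 a, hI.2 _ hcd.2 b⟩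

theorem BQuot.mk_eq_mk_iff {I : Set M} (hI : IsIdeal I) {a b : M} :
    BQuot.mk I a = BQuot.mk I b ↔ a = b ∨ (a ∈ I ∧ b ∈ I) := by
  have hcon : quotCon I = hI.addCon := AddCon.addConGen_of_addCon hI.addCon
  show ((a : (quotCon I).Quotient) = b) ↔ _
  rw [AddCon.eq, hcon]
  rfl

theorem isIdeal_smashIdeal : IsIdeal (smashIdeal M N) :=
  ⟨Or.inl rfl, fun x hx n => hx.imp
    (fun h => show n.1 + x.1 = _ by rw [h, add_infty])
    (fun h => show n.2 + x.2 = _ by rw [h, add_infty])⟩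

namespace Smash

theorem mk_surjective : Function.Surjective (fun x : M × N => mk x.1 x.2) :=
  fun x => AddCon.induction_on x fun x => ⟨x, rfl⟩

theorem mk_add_mk (a c : M) (b d : N) : mk a b + mk c d = mk (a + c) (b + d) := rfl

theorem nsmul_mk (q : ℕ) (a : M) (b : N) : q • mk a b = mk (q • a) (q • b) := rfl

theorem mk_zero_zero : mk (0 : M) (0 : N) = 0 := rfl

theorem mk_eq_mk_iff {a c : M} {b d : N} :
    mk a b = mk c d ↔
      (a = c ∧ b = d) ∨ ((a = infty ∨ b = infty) ∧ (c = infty ∨ d = infty)) := by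
  refine (BQuot.mk_eq_mk_iff (isIdeal_smashIdeal (M := M) (N := N))).trans ?_
  rw [Prod.mk.injEq]
  rfl

theorem mk_eq_infty_iff {a : M} {b : N} : mk a b = infty ↔ a = infty ∨ b = infty := by
  show mk a b = mk infty infty ↔ _
  rw [mk_eq_mk_iff]
  simp only [true_or, and_true, or_iff_right_iff_imp, and_imp]
  exact fun ha _ => Or.inl ha

theorem mk_infty_left (b : N) : mk (infty : M) b = infty := mk_eq_infty_iff.2 (Or.inl rfl)

theorem mk_infty_right (a : M) : mk a (infty : N) = infty := mk_eq_infty_iff.2 (Or.inr rfl)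

theorem mk_mem_unitSet_iff (h0M : (0 : M) ≠ infty) (h0N : (0 : N) ≠ infty) {s : M} {t : N} :
    mk s t ∈ unitSet (Smash M N) ↔ s ∈ unitSet M ∧ t ∈ unitSet N := by
  constructor
  · rintro ⟨c, hc⟩
    obtain ⟨⟨m, p⟩, rfl⟩ := mk_surjective c
    rw [mk_add_mk, ← mk_zero_zero, mk_eq_mk_iff] at hc
    rcases hc with ⟨hm, hp⟩ | ⟨-, h0 | h0⟩
    exacts [⟨⟨m, hm⟩, ⟨p, hp⟩⟩, (h0M h0).elim, (h0N h0).elim]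
  · rintro ⟨⟨m, hm⟩, ⟨p, hp⟩⟩
    exact ⟨mk m p, by rw [mk_add_mk, hm, hp, mk_zero_zero]⟩

theorem mem_frob_of_mk_mem_frob (h0M : (0 : M) ≠ infty) (h0N : (0 : N) ≠ infty) {q : ℕ}
    {a : M} {b : N} (h : mk a b ∈ frob q (plusSet (Smash M N))) :
    a ∈ frob q (plusSet M) ∨ b ∈ frob q (plusSet N) := by
  have of_infty : a = infty ∨ b = infty → a ∈ frob q (plusSet M) ∨ b ∈ frob q (plusSet N) :=
    Or.imp (· ▸ infty_mem_frob q _) (· ▸ infty_mem_frob q _)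
  obtain h | ⟨n, -, ⟨c, hc, rfl⟩, hx⟩ := h
  · exact of_infty (mk_eq_infty_iff.1 h)
  obtain ⟨⟨m, p⟩, rfl⟩ := mk_surjective n
  obtain ⟨⟨s, t⟩, rfl⟩ := mk_surjective c
  rw [nsmul_mk, mk_add_mk, mk_eq_mk_iff] at hx
  obtain ⟨rfl, rfl⟩ | ⟨hab, -⟩ := hx
  · have hst : s ∈ plusSet M ∨ t ∈ plusSet N := by
      rw [plusSet, Set.mem_compl_iff, mk_mem_unitSet_iff h0M h0N, not_and_or] at hc
      exact hc
    exact hst.imp (add_nsmul_mem_frob q · m) (add_nsmul_mem_frob q · p)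
  · exact of_infty hab

theorem mk_mem_frob_of_left (h0M : (0 : M) ≠ infty) (h0N : (0 : N) ≠ infty) {q : ℕ} {a : M}
    (ha : a ∈ frob q (plusSet M)) (b : N) : mk a b ∈ frob q (plusSet (Smash M N)) := by
  obtain rfl | ⟨m, -, ⟨s, hs, rfl⟩, rfl⟩ := ha
  · rw [mk_infty_left]
    exact infty_mem_frob q _
  · have hs' : mk s (0 : N) ∈ plusSet (Smash M N) :=
      fun hu => hs ((mk_mem_unitSet_iff h0M h0N).1 hu).1
    simpa only [nsmul_mk, mk_add_mk, smul_zero, add_zero] using add_nsmul_mem_frob q hs' (mk m b)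

theorem mk_mem_frob_of_right (h0M : (0 : M) ≠ infty) (h0N : (0 : N) ≠ infty) {q : ℕ} (a : M)
    {b : N} (hb : b ∈ frob q (plusSet N)) : mk a b ∈ frob q (plusSet (Smash M N)) := by
  obtain rfl | ⟨p, -, ⟨t, ht, rfl⟩, rfl⟩ := hb
  · rw [mk_infty_right]
    exact infty_mem_frob q _
  · have ht' : mk (0 : M) t ∈ plusSet (Smash M N) :=
      fun hu => ht ((mk_mem_unitSet_iff h0M h0N).1 hu).2
    simpa only [nsmul_mk, mk_add_mk, smul_zero, add_zero] using add_nsmul_mem_frob q ht' (mk a p)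

theorem mk_mem_frob_plusSet_iff {q : ℕ} {a : M} {b : N} :
    mk a b ∈ frob q (plusSet (Smash M N)) ↔
      a ∈ frob q (plusSet M) ∨ b ∈ frob q (plusSet N) := by
  by_cases h0M : (0 : M) = infty
  · have ha := eq_infty_of_zero_eq_infty h0M a
    simp only [ha, infty_mem_frob, true_or, iff_true]
    rw [mk_infty_left]
    exact infty_mem_frob q _
  by_cases h0N : (0 : N) = infty
  · have hb := eq_infty_of_zero_eq_infty h0N b
    simp only [hb, infty_mem_frob, or_true, iff_true]
    rw [mk_infty_right]
    exact infty_mem_frob q _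
  exact ⟨mem_frob_of_mk_mem_frob h0M h0N,
    Or.rec (mk_mem_frob_of_left h0M h0N · b) (mk_mem_frob_of_right h0M h0N a)⟩

noncomputable def complFrobPlusSetEquiv (q : ℕ) :
    ↥(frob q (plusSet M))ᶜ × ↥(frob q (plusSet N))ᶜ ≃ ↥(frob q (plusSet (Smash M N)))ᶜ :=
  Equiv.ofBijective
    (fun x => ⟨mk x.1.1 x.2.1, fun h => (mk_mem_frob_plusSet_iff.1 h).elim x.1.2 x.2.2⟩)
    ⟨by
      rintro ⟨⟨a, ha⟩, ⟨b, hb⟩⟩ ⟨⟨c, hc⟩, ⟨d, hd⟩⟩ h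
      have h' : mk a b = mk c d := congrArg Subtype.val h
      obtain ⟨rfl, rfl⟩ | ⟨hab, -⟩ := mk_eq_mk_iff.1 h'
      · rfl
      · exact (hab.elim (ne_infty_of_notMem_frob ha) (ne_infty_of_notMem_frob hb)).elim,
    by
      rintro ⟨x, hx⟩
      obtain ⟨⟨a, b⟩, rfl⟩ := mk_surjective x
      obtain ⟨ha, hb⟩ := not_or.1 (mt mk_mem_frob_plusSet_iff.2 hx)
      exact ⟨(⟨a, ha⟩, ⟨b, hb⟩), rfl⟩⟩

end Smash

end Binoid

open Binoid

theorem hkf_smash_general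
    {M N : Type*} [Binoid M] [Binoid N] :
    ∀ q : ℕ, 0 < q →
      hkOn (plusSet (Smash M N)) q = hkOn (plusSet M) q * hkOn (plusSet N) q := by
  intro q _
  simp only [hkOn, ← Nat.card_coe_set_eq, ← Nat.card_prod]
  exact (Nat.card_congr (Smash.complFrobPlusSetEquiv q)).symm

/-- **Statement 7.** Let `M` and `N` be finitely generated, semipositive binoids. Then for
every positive integer `q`, `#((M∧N)/[q](M∧N)₊) = #(M/[q]M₊) · #(N/[q]N₊)`. -/
theorem hkf_smash
    {M N : Type*} [Binoid M] [Binoid N]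
    (hfgM : FG M) (hspM : Semipositive M) (hfgN : FG N) (hspN : Semipositive N) :
    ∀ q : ℕ, 0 < q →
      hkOn (plusSet (Smash M N)) q = hkOn (plusSet M) q * hkOn (plusSet N) q :=
  hkf_smash_general
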